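/- If a joint strategy δ has CCE gap equal to γ and is ε-normal-form-marginalizable (total correlation at most ε), then the product of its marginals μ(δ) is a (γ + 2M√(2ε))-approximate Nash equilibrium: NashGap(μ(δ)) ≤ γ + 2M√(2ε), where M = max_{i∈N} max_{ρ∈P} |u_i(ρ)|. -/

import Mathlib

open Finset

noncomputable def marg {N : Type} [Fintype N] [DecidableEq N]
    {P : N → Type} [∀ i, Fintype (P i)] [∀ i, DecidableEq (P i)]
    (δ : (∀ j, P j) → ℝ) (i : N) (a : P i) : ℝ :=
  ∑ ρ : ∀ j, P j, if ρ i = a then δ ρ else 0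

noncomputable def prodMarg {N : Type} [Fintype N] [DecidableEq N]
    {P : N → Type} [∀ i, Fintype (P i)] [∀ i, DecidableEq (P i)]
    (δ : (∀ j, P j) → ℝ) (ρ : ∀ j, P j) : ℝ :=
  ∏ i, marg δ i (ρ i)

noncomputable def KL {X : Type} [Fintype X] (p q : X → ℝ) : ℝ :=
  ∑ x, p x * Real.log (p x / q x)

noncomputable def expUtil {X : Type} [Fintype X] (u : X → ℝ) (δ : X → ℝ) : ℝ :=
  ∑ x, u x * δ x

/-- Expected utility for player `i` when they deviate to the pure strategy `a` while the
other players continue to play according to (the marginal of) `δ`. -/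
noncomputable def devUtil {N : Type} [Fintype N] [DecidableEq N]
    {P : N → Type} [∀ i, Fintype (P i)] [∀ i, DecidableEq (P i)]
    (u : N → (∀ j, P j) → ℝ) (δ : (∀ j, P j) → ℝ) (i : N) (a : P i) : ℝ :=
  ∑ ρ, δ ρ * u i (Function.update ρ i a)

/-- The (CCE/Nash) gap of a joint strategy `δ`: the largest gain available to any player
from deviating to any fixed pure strategy. -/
noncomputable def gap {N : Type} [Fintype N] [DecidableEq N] [Nonempty N]
    {P : N → Type} [∀ i, Fintype (P i)] [∀ i, DecidableEq (P i)] [∀ i, Nonempty (P i)]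
    (u : N → (∀ j, P j) → ℝ) (δ : (∀ j, P j) → ℝ) : ℝ :=
  haveI : Nonempty (Σ i, P i) := ⟨⟨Classical.arbitrary N, Classical.arbitrary _⟩⟩
  Finset.univ.sup' Finset.univ_nonempty
    (fun q : Σ i, P i => devUtil u δ q.1 q.2 - expUtil (u q.1) δ)

/-!
Write `μ = μ(δ)`. Replacing `δ` by `μ` changes each expectation in a deviation gain
`u_i(a, ·_{-i}) - u_i(·)` by at most `M ‖δ - μ‖₁`, so every gain grows by at most
`2 M ‖δ - μ‖₁`, and Pinsker's inequality gives `‖δ - μ‖₁ ≤ √(2 KL(δ ‖ μ)) ≤ √(2ε)`.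

Pinsker's inequality follows from the pointwise bound `(3/2)(t - 1)² / (t + 2) ≤ t log t - t + 1`
(the difference is convex on `[0, ∞)` with a critical point at `1`) and Cauchy–Schwarz:
`∑ |p - q| = ∑ √(p + 2q) √((p - q)² / (p + 2q))` with `∑ (p + 2q) = 3`.
-/

open Real

lemma three_halves_mul_sq_div_le {t : ℝ} (ht : 0 ≤ t) :
    3 / 2 * (t - 1) ^ 2 / (t + 2) ≤ t * log t - t + 1 := by
  set g : ℝ → ℝ := fun t ↦ t * log t - t + 1 - 3 / 2 * (t - 1) ^ 2 / (t + 2)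
  set g' : ℝ → ℝ := fun t ↦ log t - 3 / 2 * (t - 1) * (t + 5) / (t + 2) ^ 2
  have hg : ∀ t > 0, HasDerivAt g (g' t) t := by
    intro t ht
    have h := (((hasDerivAt_mul_log ht.ne').sub (hasDerivAt_id t)).add_const 1).sub
      (((((hasDerivAt_id t).sub_const 1).pow 2).const_mul (3 / 2)).div
        ((hasDerivAt_id t).add_const 2) (by positivity))
    refine h.congr_deriv ?_
    simp only [g', id_eq, Pi.pow_apply]
    field_simp
    ring
  have hg' : ∀ t > 0, HasDerivAt g' ((t - 1) ^ 2 * (t + 8) / (t * (t + 2) ^ 3)) t := by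
    intro t ht
    have h := (hasDerivAt_log ht.ne').sub
      (((((hasDerivAt_id t).sub_const 1).const_mul (3 / 2)).mul
        ((hasDerivAt_id t).add_const 5)).div (((hasDerivAt_id t).add_const 2).pow 2)
        (pow_ne_zero 2 (show t + 2 ≠ 0 by positivity)))
    refine h.congr_deriv ?_
    simp only [id_eq, Pi.pow_apply, Pi.mul_apply]
    field_simp
    ring
  have hconv : ConvexOn ℝ (Set.Ici 0) g := by
    refine convexOn_of_hasDerivWithinAt2_nonneg (convex_Ici 0) ?_
      (fun x hx ↦ (hg x (by simpa using hx)).hasDerivWithinAt)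
      (fun x hx ↦ (hg' x (by simpa using hx)).hasDerivWithinAt) ?_
    · have : ∀ x ∈ Set.Ici (0 : ℝ), x + 2 ≠ 0 := fun x hx ↦ by rw [Set.mem_Ici] at hx; positivity
      fun_prop (disch := assumption)
    · intro x hx
      simp only [interior_Ici, Set.mem_Ioi] at hx
      positivity
  have hmin : IsMinOn g (Set.Ici 0) 1 := hconv.isMinOn_of_rightDeriv_eq_zero (by simp) <| by
    rw [((hg 1 one_pos).hasDerivWithinAt).derivWithin (uniqueDiffWithinAt_Ioi 1)]
    simp [g']
  have h1t : g 1 ≤ g t := hmin ht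
  norm_num [g] at h1t
  linarith

lemma three_halves_mul_sq_div_le_mul_log_div {p q : ℝ} (hp : 0 ≤ p) (hq : 0 < q) :
    3 / 2 * ((p - q) ^ 2 / (p + 2 * q)) ≤ p * log (p / q) - p + q := by
  have hw : p + 2 * q ≠ 0 := by positivity
  calc 3 / 2 * ((p - q) ^ 2 / (p + 2 * q)) = q * (3 / 2 * (p / q - 1) ^ 2 / (p / q + 2)) := by
        field_simp
    _ ≤ q * (p / q * log (p / q) - p / q + 1) :=
        mul_le_mul_of_nonneg_left (three_halves_mul_sq_div_le (div_nonneg hp hq.le)) hq.le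
    _ = p * log (p / q) - p + q := by field_simp

/-- `KL` reads `log (p / 0)` as `0`, hence the absolute-continuity hypothesis `hpq`. -/
theorem sum_abs_sub_le_sqrt_two_mul_KL {X : Type} [Fintype X] {p q : X → ℝ}
    (hp : ∀ x, 0 ≤ p x) (hq : ∀ x, 0 ≤ q x) (hps : ∑ x, p x = 1) (hqs : ∑ x, q x = 1)
    (hpq : ∀ x, q x = 0 → p x = 0) :
    ∑ x, |p x - q x| ≤ √(2 * KL p q) := by
  set w : X → ℝ := fun x ↦ p x + 2 * q x
  set b : X → ℝ := fun x ↦ (p x - q x) ^ 2 / w x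
  have hw : ∀ x, 0 ≤ w x := fun x ↦ by linarith [hp x, hq x]
  have hb : ∀ x, 0 ≤ b x := fun x ↦ div_nonneg (sq_nonneg _) (hw x)
  have habs : ∀ x, |p x - q x| = √(w x) * √(b x) := by
    intro x
    rcases (hw x).eq_or_lt with h | h
    · obtain ⟨hp0, hq0⟩ : p x = 0 ∧ q x = 0 := by
        constructor <;> linarith [hp x, hq x, show p x + 2 * q x = 0 from h.symm]
      simp [b, hp0, hq0]
    · rw [← sqrt_mul (hw x), mul_div_cancel₀ _ h.ne', sqrt_sq_eq_abs]
  have hb_le : ∀ x, 3 / 2 * b x ≤ p x * log (p x / q x) - p x + q x := by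
    intro x
    rcases (hq x).eq_or_lt with h | h
    · simp [b, hpq x h.symm, ← h]
    · exact three_halves_mul_sq_div_le_mul_log_div (hp x) h
  have hsum_w : ∑ x, w x = 3 := by
    simp only [w, sum_add_distrib, ← mul_sum, hps, hqs]
    norm_num
  have hsum_b : ∑ x, b x ≤ 2 / 3 * KL p q := by
    have h := sum_le_sum fun x (_ : x ∈ univ) ↦ hb_le x
    simp only [← mul_sum, sum_add_distrib, sum_sub_distrib, hps, hqs] at h
    rw [KL]
    linarith
  calc ∑ x, |p x - q x| = ∑ x, √(w x) * √(b x) := sum_congr rfl fun x _ ↦ habs x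
    _ ≤ √(∑ x, w x) * √(∑ x, b x) := sum_sqrt_mul_sqrt_le _ hw hb
    _ ≤ √3 * √(2 / 3 * KL p q) := by rw [hsum_w]; gcongr
    _ = √(2 * KL p q) := by rw [← sqrt_mul (by norm_num)]; ring_nf

lemma abs_sum_mul_sub_sum_mul_le {X : Type} [Fintype X] {f : X → ℝ} {M : ℝ}
    (hf : ∀ x, |f x| ≤ M) (p q : X → ℝ) :
    |∑ x, p x * f x - ∑ x, q x * f x| ≤ M * ∑ x, |p x - q x| := by
  rw [← sum_sub_distrib, mul_sum]
  refine (abs_sum_le_sum_abs _ _).trans (sum_le_sum fun x _ ↦ ?_)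
  rw [← sub_mul, abs_mul, mul_comm]
  exact mul_le_mul_of_nonneg_right (hf x) (abs_nonneg _)

section Game

variable {N : Type} [Fintype N] [DecidableEq N]
  {P : N → Type} [∀ i, Fintype (P i)] [∀ i, DecidableEq (P i)] {δ : (∀ j, P j) → ℝ}

lemma marg_eq_sum_filter (i : N) (a : P i) :
    marg δ i a = ∑ ρ ∈ univ.filter (fun ρ : ∀ j, P j ↦ ρ i = a), δ ρ :=
  (sum_filter _ _).symm

lemma marg_nonneg (hδ : ∀ ρ, 0 ≤ δ ρ) (i : N) (a : P i) : 0 ≤ marg δ i a := by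
  rw [marg_eq_sum_filter]
  exact sum_nonneg fun ρ _ ↦ hδ ρ

lemma le_marg (hδ : ∀ ρ, 0 ≤ δ ρ) (ρ : ∀ j, P j) (i : N) : δ ρ ≤ marg δ i (ρ i) := by
  rw [marg_eq_sum_filter]
  exact single_le_sum (fun ρ' _ ↦ hδ ρ') (by simp)

lemma sum_marg (hsum : ∑ ρ, δ ρ = 1) (i : N) : ∑ a, marg δ i a = 1 := by
  simp only [marg]
  rw [sum_comm]
  simp [hsum]

lemma prodMarg_nonneg (hδ : ∀ ρ, 0 ≤ δ ρ) (ρ : ∀ j, P j) : 0 ≤ prodMarg δ ρ :=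
  prod_nonneg fun i _ ↦ marg_nonneg hδ i (ρ i)

lemma sum_prodMarg (hsum : ∑ ρ, δ ρ = 1) : ∑ ρ, prodMarg δ ρ = 1 := by
  simp only [prodMarg, ← Fintype.prod_sum, sum_marg hsum, prod_const_one]

lemma eq_zero_of_prodMarg_eq_zero (hδ : ∀ ρ, 0 ≤ δ ρ) {ρ : ∀ j, P j}
    (h : prodMarg δ ρ = 0) : δ ρ = 0 := by
  obtain ⟨i, -, hi⟩ := prod_eq_zero_iff.mp h
  exact le_antisymm (hi ▸ le_marg hδ ρ i) (hδ ρ)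

lemma gap_le_gap_add_two_mul_sum_abs_sub [Nonempty N] [∀ i, Nonempty (P i)]
    {u : N → (∀ j, P j) → ℝ} {M : ℝ} (hu : ∀ i ρ, |u i ρ| ≤ M) (δ μ : (∀ j, P j) → ℝ) :
    gap u μ ≤ gap u δ + 2 * M * ∑ ρ, |δ ρ - μ ρ| := by
  rw [gap]
  refine sup'_le _ _ fun ⟨i, a⟩ _ ↦ ?_
  have hδ : devUtil u δ i a - expUtil (u i) δ ≤ gap u δ :=
    le_sup' (fun q : Σ i, P i ↦ devUtil u δ q.1 q.2 - expUtil (u q.1) δ) (mem_univ ⟨i, a⟩)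
  have hdev := abs_le.mp (abs_sum_mul_sub_sum_mul_le (fun ρ ↦ hu i (Function.update ρ i a)) δ μ)
  have hexp : |expUtil (u i) δ - expUtil (u i) μ| ≤ M * ∑ ρ, |δ ρ - μ ρ| := by
    simpa only [expUtil, mul_comm (u i _)] using abs_sum_mul_sub_sum_mul_le (hu i) δ μ
  simp only [devUtil] at hδ ⊢
  linarith [abs_le.mp hexp]

end Game

/-- If a joint strategy `δ` has CCE gap `γ` and is `ε`-normal-form-marginalizable
(total correlation at most `ε`), then the product of its marginals is a
`(γ + 2M√(2ε))`-approximate Nash equilibrium. -/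
theorem nashGap_le_of_marginalizable
    {N : Type} [Fintype N] [DecidableEq N] [Nonempty N]
    {P : N → Type} [∀ i, Fintype (P i)] [∀ i, DecidableEq (P i)] [∀ i, Nonempty (P i)]
    (u : N → (∀ j, P j) → ℝ) (M : ℝ)
    (hM : M = (Finset.univ : Finset (N × (∀ j, P j))).sup' Finset.univ_nonempty
      (fun q => |u q.1 q.2|))
    (δ : (∀ j, P j) → ℝ) (hpos : ∀ ρ, 0 ≤ δ ρ) (hsum : ∑ ρ, δ ρ = 1)
    (γ ε : ℝ) (hγ : gap u δ = γ) (hε : KL δ (prodMarg δ) ≤ ε) :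
    gap u (prodMarg δ) ≤ γ + 2 * M * Real.sqrt (2 * ε) := by
  have hu : ∀ i ρ, |u i ρ| ≤ M := fun i ρ ↦
    hM ▸ le_sup' (fun q : N × (∀ j, P j) ↦ |u q.1 q.2|) (mem_univ (i, ρ))
  have hM0 : 0 ≤ M := (abs_nonneg _).trans (hu (Classical.arbitrary N) (Classical.arbitrary _))
  have hl1 : ∑ ρ, |δ ρ - prodMarg δ ρ| ≤ √(2 * ε) :=
    (sum_abs_sub_le_sqrt_two_mul_KL hpos (prodMarg_nonneg hpos) hsum (sum_prodMarg hsum)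
      fun _ ↦ eq_zero_of_prodMarg_eq_zero hpos).trans (sqrt_le_sqrt (by linarith))
  calc gap u (prodMarg δ) ≤ gap u δ + 2 * M * ∑ ρ, |δ ρ - prodMarg δ ρ| :=
        gap_le_gap_add_two_mul_sum_abs_sub hu δ (prodMarg δ)
    _ ≤ γ + 2 * M * √(2 * ε) := by rw [hγ]; gcongr
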